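/- Two terms t, t' of the free algebra F_⊗(V) on one n-ary operation are related by the n-Catalan congruence if and only if they have the same underlying list: t ≈ t' ⟺ U(t) = U(t'). -/

import Mathlib

/-
Every term is congruent to the left-most bracketing `lmb t` of its underlying list, and `lmb t`
depends on `U t` alone. View a term as the left comb `lmbAux h l` of a head and a list of subterms
and expand its brackets one at a time. If the bracket `⊗(f)` being expanded, preceded by the
subterms `a`, lies in the first block of the comb, both combs bracket the same `2n - 1` terms,
with the inner bracket at position `|a| + 1` and at position `0` respectively, and the defining
moves shift it from one to the other; otherwise the first block is common to both sides and is
peeled off. Since `|U t| ≡ 1 (mod n - 1)`, expanding a whole subterm keeps the list length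
divisible by `n - 1`, so every bracket stays inside a complete block. Conversely, `U` is
invariant under each generator of the congruence.
-/

/-- Terms of the free algebra on one `n`-ary operation. -/
inductive CTerm (V : Type*) (n : ℕ) : Type _
  | var : V → CTerm V n
  | op : (Fin n → CTerm V n) → CTerm V n

namespace CTerm

variable {V : Type*} {n : ℕ}

/-- The term `⊗(s_0,…,s_{p-1}, ⊗(s_p,…,s_{p+n-1}), s_{p+n},…,s_{2n-2})`:
the outer `n`-ary bracketing of the `2n-1` terms `s` with an inner bracket
("pivot") at (0-based) position `p`. -/
def catAt (p : ℕ) (_hp : p < n) (s : Fin (2 * n - 1) → CTerm V n) : CTerm V n :=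
  .op fun q =>
    if (q : ℕ) < p then s ⟨q, by have := q.isLt; omega⟩
    else if (q : ℕ) = p then
      .op fun k => s ⟨p + k, by have := q.isLt; have := k.isLt; omega⟩
    else s ⟨(q : ℕ) + n - 1, by have := q.isLt; omega⟩

/-- The underlying list of variables of a term. -/
def U : CTerm V n → List V
  | .var v => [v]
  | .op f => (List.ofFn fun i => U (f i)).flatten

/-- Left-most bracketing of a nonempty list of terms (head + tail). -/
def lmbAux : CTerm V n → List (CTerm V n) → CTerm V n
  | t, [] => t
  | t, r :: rs =>
    if h : 2 ≤ n ∧ n ≤ rs.length + 2 then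
      lmbAux (.op fun i => (t :: r :: rs).getD i t) ((r :: rs).drop (n - 1))
    else t
  termination_by _ l => l.length
  decreasing_by simp [List.length_drop]; omega

/-- Left-most bracketing of a term. -/
def lmb (t : CTerm V n) : CTerm V n :=
  match (U t).map (CTerm.var (n := n)) with
  | [] => t
  | h :: tl => lmbAux h tl

/-- Length of a term. -/
def L : CTerm V n → ℕ
  | .var _ => 1
  | .op f => ∑ i, L (f i)

/-- Rank of a term. -/
def R : CTerm V n → ℤ
  | .var _ => 0
  | .op f => (∑ i, R (f i)) + (∑ i : Fin n, ((i : ℕ) : ℤ) * (L (f i) : ℤ)) - (n * (n - 1) : ℤ) / 2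

end CTerm

/-- The `n`-Catalan congruence on `CTerm V n`. -/
inductive CatRel (V : Type*) (n : ℕ) : CTerm V n → CTerm V n → Prop
  | refl (t) : CatRel V n t t
  | symm {t t'} : CatRel V n t t' → CatRel V n t' t
  | trans {t t' t''} : CatRel V n t t' → CatRel V n t' t'' → CatRel V n t t''
  | compat {f g : Fin n → CTerm V n} :
      (∀ j, CatRel V n (f j) (g j)) → CatRel V n (.op f) (.op g)
  | assoc (i : ℕ) (hi : i + 1 < n) (s : Fin (2 * n - 1) → CTerm V n) :
      CatRel V n (CTerm.catAt (i + 1) hi s) (CTerm.catAt i (by omega) s)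

/-- The symmetric `n`-Catalan congruence on `CTerm V n`. -/
inductive SymCatRel (V : Type*) (n : ℕ) : CTerm V n → CTerm V n → Prop
  | refl (t) : SymCatRel V n t t
  | symm {t t'} : SymCatRel V n t t' → SymCatRel V n t' t
  | trans {t t' t''} : SymCatRel V n t t' → SymCatRel V n t' t'' → SymCatRel V n t t''
  | compat {f g : Fin n → CTerm V n} :
      (∀ j, SymCatRel V n (f j) (g j)) → SymCatRel V n (.op f) (.op g)
  | assoc (i : ℕ) (hi : i + 1 < n) (s : Fin (2 * n - 1) → CTerm V n) :
      SymCatRel V n (CTerm.catAt (i + 1) hi s) (CTerm.catAt i (by omega) s)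
  | swap (i : ℕ) (hi : i + 1 < n) (s : Fin n → CTerm V n) :
      SymCatRel V n (.op s) (.op (s ∘ Equiv.swap ⟨i, by omega⟩ ⟨i + 1, hi⟩))

lemma List.ofFn_add_eq_take_drop {α : Type*} {m : ℕ} (s : Fin m → α) (p k : ℕ) (h : p + k ≤ m) :
    List.ofFn (fun i : Fin k => s ⟨p + i, by omega⟩) = ((List.ofFn s).drop p).take k := by
  apply List.ext_getElem <;> simp; omega

namespace CTerm

variable {V : Type*} {n : ℕ}

instance : Trans (CatRel V n) (CatRel V n) (CatRel V n) := ⟨CatRel.trans⟩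

def args : CTerm V n → List (CTerm V n)
  | .var _ => []
  | .op f => List.ofFn f

@[simp] lemma args_op (f : Fin n → CTerm V n) : (op f).args = List.ofFn f := rfl

@[simp] lemma U_var (v : V) : U (var (n := n) v) = [v] := rfl

lemma U_op (f : Fin n → CTerm V n) : U (op f) = (List.ofFn f).flatMap U := by
  simp [U, List.flatMap_def, List.map_ofFn, Function.comp_def]

lemma args_catAt (p : ℕ) (hp : p < n) (s : Fin (2 * n - 1) → CTerm V n) :
    (catAt p hp s).args =
      (List.ofFn s).take p ++ op (fun k => s ⟨p + k, by omega⟩) :: (List.ofFn s).drop (p + n) := by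
  apply List.ext_getElem
  · simp [catAt]; omega
  · intro q h₁ h₂
    simp only [catAt, args_op, List.getElem_ofFn]
    rcases lt_trichotomy q p with hq | rfl | hq
    · rw [List.getElem_append_left (by simp; omega)]
      simp [hq]
    · simp [show min q (2 * n - 1) = q by omega]
    · obtain ⟨j, rfl⟩ : ∃ j, q = p + (j + 1) := ⟨q - p - 1, by omega⟩
      rw [List.getElem_append_right (by simp)]
      simp [show min p (2 * n - 1) = p by omega, Nat.add_right_comm]

lemma U_catAt (p : ℕ) (hp : p < n) (s : Fin (2 * n - 1) → CTerm V n) :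
    U (catAt p hp s) = (List.ofFn s).flatMap U := by
  obtain ⟨F, hF⟩ : ∃ F, catAt p hp s = op F := ⟨_, rfl⟩
  rw [hF, U_op, ← args_op, ← hF, args_catAt, List.flatMap_append, List.flatMap_cons, U_op,
    List.ofFn_add_eq_take_drop _ _ _ (by omega)]
  generalize List.ofFn s = L
  conv_rhs => rw [← List.take_append_drop p L, ← List.take_append_drop n (L.drop p)]
  simp only [List.flatMap_append, List.drop_drop]

lemma U_eq_of_catRel {t t' : CTerm V n} (h : CatRel V n t t') : U t = U t' := by
  induction h with
  | refl => rfl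
  | symm _ ih => exact ih.symm
  | trans _ _ ih₁ ih₂ => exact ih₁.trans ih₂
  | compat _ ih => simp only [U_op, List.flatMap_def, List.map_ofFn, Function.comp_def, ih]
  | assoc => simp only [U_catAt]

lemma U_ne_nil (hn : 0 < n) (t : CTerm V n) : U t ≠ [] := by
  induction t with
  | var => simp
  | op f ih => simpa [U_op] using ⟨⟨0, hn⟩, ih _⟩

lemma length_U_modEq (hn : 0 < n) (t : CTerm V n) : (U t).length ≡ 1 [MOD n - 1] := by
  induction t with
  | var => rfl
  | op f ih =>
    calc (U (op f)).length = ((List.ofFn f).map fun t => (U t).length).sum := by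
          simp [U_op, Function.comp_def]
      _ ≡ ((List.ofFn f).map fun _ => 1).sum [MOD n - 1] :=
          Nat.ModEq.listSum_map (by simpa using ih)
      _ = n := by simp [Function.comp_def]
      _ ≡ 1 [MOD n - 1] := ((Nat.modEq_iff_dvd' hn).2 dvd_rfl).symm

lemma lmbAux_append (hn : 2 ≤ n) (t : CTerm V n) {l : List (CTerm V n)} (hl : l.length = n - 1)
    (rest : List (CTerm V n)) :
    lmbAux t (l ++ rest) = lmbAux (op fun i => (t :: l).getD i t) rest := by
  obtain ⟨r, rs, rfl⟩ := List.exists_cons_of_length_pos (show 0 < l.length by omega)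
  rw [List.cons_append, lmbAux, dif_pos (by simp at hl ⊢; omega), ← List.cons_append,
    List.drop_left' hl]
  congr 2 with i
  rw [← List.cons_append, List.getD_append _ _ _ _ (by simp at hl ⊢; omega)]

lemma lmbAux_of_args (hn : 2 ≤ n) {u t : CTerm V n} {l : List (CTerm V n)} (h : u.args = t :: l)
    (rest : List (CTerm V n)) : lmbAux t (l ++ rest) = lmbAux u rest := by
  cases u with
  | var => simp [args] at h
  | op f =>
    have hl : l.length = n - 1 := by
      have := congrArg List.length h
      simp only [args_op, List.length_ofFn, List.length_cons] at this
      omega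
    rw [lmbAux_append hn t hl]
    congr 2 with i
    rw [args_op] at h
    rw [← h, List.getD_eq_getElem _ _ (by simp), List.getElem_ofFn]

lemma lmbAux_congr {t t' : CTerm V n} (h : CatRel V n t t') (rs : List (CTerm V n)) :
    CatRel V n (lmbAux t rs) (lmbAux t' rs) := by
  induction t, rs using lmbAux.induct generalizing t' with
  | case1 t => rwa [lmbAux, lmbAux]
  | case2 t r rs hc ih =>
    rw [lmbAux, dif_pos hc, lmbAux, dif_pos hc]
    apply ih
    apply CatRel.compat
    rintro ⟨_ | j, hj⟩
    · simpa
    · simp only [List.getD_cons_succ]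
      rw [List.getD_eq_getElem _ _ (by simp; omega), List.getD_eq_getElem _ _ (by simp; omega)]
      exact .refl _
  | case3 t r rs hc => rwa [lmbAux, dif_neg hc, lmbAux, dif_neg hc]

lemma catRel_catAt_zero (s : Fin (2 * n - 1) → CTerm V n) :
    ∀ (p : ℕ) (hp : p < n), CatRel V n (catAt p hp s) (catAt 0 (by omega) s)
  | 0, _ => .refl _
  | p + 1, hp => (CatRel.assoc p hp s).trans (catRel_catAt_zero s p _)

lemma lmbAux_expand_of_length_lt (hn : 2 ≤ n) (h : CTerm V n) {a : List (CTerm V n)}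
    (f : Fin n → CTerm V n) {b : List (CTerm V n)} (ha : a.length < n - 1)
    (hb : n - 2 - a.length ≤ b.length) :
    CatRel V n (lmbAux h (a ++ op f :: b)) (lmbAux h (a ++ List.ofFn f ++ b)) := by
  set p := a.length
  set c := b.take (n - 2 - p)
  set M := a ++ List.ofFn f ++ c
  have hM : M.length = 2 * n - 2 := by simp [M, c, p]; omega
  set s : Fin (2 * n - 1) → CTerm V n := fun j => (h :: M).getD j h
  have hs : List.ofFn s = h :: M :=
    List.ext_getElem (by simp [hM]; omega) (fun _ _ hi => by simp [s, List.getElem?_eq_getElem hi])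
  have h_left :
      lmbAux h (a ++ op f :: b) = lmbAux (catAt (p + 1) (by omega) s) (b.drop (n - 2 - p)) := by
    have hargs : (catAt (p + 1) (by omega) s).args = h :: (a ++ op f :: c) := by
      rw [args_catAt, hs]
      simp only [List.take_succ_cons, List.drop_succ_cons, Nat.add_right_comm p 1 n,
        List.cons_append]
      congr 3
      · simp [M, p]
      · congr 1 with k
        simp only [s, M, p, List.getD_eq_getElem?_getD, List.append_assoc]
        rw [Nat.add_right_comm, List.getElem?_cons_succ, List.getElem?_append_right (by omega),
          Nat.add_sub_cancel_left, List.getElem?_append_left (by simp)]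
        simp
      · simp [M, p]
    rw [← lmbAux_of_args hn hargs]
    simp [c]
  have h_right :
      lmbAux (catAt 0 (by omega) s) (b.drop (n - 2 - p)) = lmbAux h (a ++ List.ofFn f ++ b) := by
    have hargs : (catAt 0 (by omega) s).args =
        op (fun k : Fin n => s ⟨0 + k, by omega⟩) :: M.drop (n - 1) := by
      rw [args_catAt, hs, Nat.zero_add, List.drop_cons (by omega)]
      rfl
    have hargs' : (op fun k : Fin n => s ⟨0 + k, by omega⟩).args = h :: M.take (n - 1) := by
      rw [args_op, List.ofFn_add_eq_take_drop s 0 n (by omega), hs, List.drop_zero,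
        List.take_cons (by omega)]
    rw [← lmbAux_of_args hn hargs, ← lmbAux_of_args hn hargs', ← List.append_assoc,
      List.take_append_drop]
    simp [M, c]
  rw [h_left, ← h_right]
  exact lmbAux_congr (catRel_catAt_zero s _ _) _

lemma lmbAux_expand (hn : 2 ≤ n) (h : CTerm V n) (a : List (CTerm V n)) (f : Fin n → CTerm V n)
    (b : List (CTerm V n)) (hd : n - 1 ∣ (a ++ op f :: b).length) :
    CatRel V n (lmbAux h (a ++ op f :: b)) (lmbAux h (a ++ List.ofFn f ++ b)) := by
  by_cases ha : a.length < n - 1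
  · refine lmbAux_expand_of_length_lt hn h f ha ?_
    have := Nat.le_of_dvd (by simp) hd
    simp only [List.length_append, List.length_cons] at this
    omega
  · obtain ⟨a₁, a₂, rfl, ha₁⟩ : ∃ a₁ a₂, a = a₁ ++ a₂ ∧ a₁.length = n - 1 :=
      ⟨_, _, (List.take_append_drop (n - 1) a).symm, by simp; omega⟩
    have hd₂ : n - 1 ∣ (a₂ ++ op f :: b).length := by
      simpa [ha₁, Nat.add_assoc] using hd
    simp only [List.append_assoc]
    rw [lmbAux_append hn h ha₁, lmbAux_append hn h ha₁]
    simpa only [List.append_assoc] using lmbAux_expand hn _ a₂ f b hd₂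
termination_by a.length
decreasing_by subst_vars; simp only [List.length_append]; omega

lemma lmbAux_expand_list (hn : 2 ≤ n) (h : CTerm V n) {ts : List (CTerm V n)}
    (hts : ∀ t ∈ ts, ∀ a b, n - 1 ∣ (a ++ t :: b).length →
      CatRel V n (lmbAux h (a ++ t :: b)) (lmbAux h (a ++ (U t).map var ++ b)))
    (a b : List (CTerm V n)) (hd : n - 1 ∣ (a ++ ts ++ b).length) :
    CatRel V n (lmbAux h (a ++ ts ++ b)) (lmbAux h (a ++ (ts.flatMap U).map var ++ b)) := by
  induction ts generalizing a with
  | nil => simpa using .refl _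
  | cons t ts ih =>
    have hd' : n - 1 ∣ (a ++ (U t).map var ++ ts ++ b).length := by
      have := (length_U_modEq (by omega) t).add_left (a.length + ts.length + b.length)
      have hlen : (a ++ (U t).map var ++ ts ++ b).length =
          a.length + ts.length + b.length + (U t).length := by simp; omega
      rw [hlen, this.dvd_iff dvd_rfl]
      simpa [Nat.add_assoc, Nat.add_comm, Nat.add_left_comm] using hd
    have h₁ := hts t List.mem_cons_self a (ts ++ b) (by simpa using hd)
    have h₂ := ih (fun t ht => hts t (List.mem_cons_of_mem _ ht)) (a ++ (U t).map var) hd'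
    simp only [List.append_assoc, List.cons_append, List.flatMap_cons, List.map_append] at h₁ h₂ ⊢
    exact h₁.trans h₂

lemma lmbAux_expand_U (hn : 2 ≤ n) (h t : CTerm V n) (a b : List (CTerm V n))
    (hd : n - 1 ∣ (a ++ t :: b).length) :
    CatRel V n (lmbAux h (a ++ t :: b)) (lmbAux h (a ++ (U t).map var ++ b)) := by
  induction t generalizing a b with
  | var => simpa using .refl _
  | op f ih =>
    refine (lmbAux_expand hn h a f b hd).trans ?_
    rw [U_op]
    refine lmbAux_expand_list hn h (fun t ht => ?_) a b ?_
    · obtain ⟨i, rfl⟩ := List.mem_ofFn.1 ht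
      exact ih i
    · have hlen : (a ++ List.ofFn f ++ b).length = (a ++ op f :: b).length + (n - 1) := by
        simp; omega
      exact hlen ▸ dvd_add hd dvd_rfl

lemma catRel_lmbAux_of_U_eq_cons (hn : 2 ≤ n) (t : CTerm V n) {rs : List (CTerm V n)}
    (hrs : n - 1 ∣ rs.length) {v : V} {vs : List V} (hU : U t = v :: vs) :
    CatRel V n (lmbAux t rs) (lmbAux (var v) (vs.map var ++ rs)) := by
  induction t generalizing rs v vs with
  | var w =>
    obtain ⟨rfl, rfl⟩ : w = v ∧ [] = vs := by simpa using hU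
    exact .refl _
  | op f ih =>
    obtain ⟨t₀, l, hl⟩ :=
      List.exists_cons_of_ne_nil (mt List.ofFn_eq_nil_iff.1 (by omega) : List.ofFn f ≠ [])
    obtain ⟨i, rfl⟩ := List.mem_ofFn.1 (hl ▸ List.mem_cons_self : t₀ ∈ List.ofFn f)
    obtain ⟨v₀, vs₀, hv₀⟩ := List.exists_cons_of_ne_nil (U_ne_nil (by omega) (f i))
    obtain ⟨rfl, rfl⟩ : v₀ = v ∧ vs₀ ++ l.flatMap U = vs := by
      simpa [U_op, hl, hv₀] using hU
    have hl_len : l.length = n - 1 := by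
      have := congrArg List.length hl
      simp only [List.length_ofFn, List.length_cons] at this
      omega
    have hvs₀ : n - 1 ∣ vs₀.length := by
      have := length_U_modEq (by omega) (f i)
      rw [hv₀, List.length_cons] at this
      exact Nat.modEq_zero_iff_dvd.1 (Nat.ModEq.add_right_cancel' 1 this)
    calc lmbAux (op f) rs
        _ = lmbAux (f i) (l ++ rs) := (lmbAux_of_args hn (u := op f) hl rs).symm
        CatRel V n _ (lmbAux (var v₀) (vs₀.map var ++ (l ++ rs))) := by
          refine ih i ?_ hv₀
          rw [List.length_append, hl_len]
          exact dvd_add dvd_rfl hrs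
        CatRel V n _ (lmbAux (var v₀) (vs₀.map var ++ (l.flatMap U).map var ++ rs)) := by
          rw [← List.append_assoc]
          refine lmbAux_expand_list hn _ (fun t _ => lmbAux_expand_U hn _ t) _ _ ?_
          simpa [hl_len] using dvd_add hvs₀ (dvd_add dvd_rfl hrs)
        _ = lmbAux (var v₀) ((vs₀ ++ l.flatMap U).map var ++ rs) := by simp

lemma lmb_eq_of_U_eq_cons {t : CTerm V n} {v : V} {vs : List V} (h : U t = v :: vs) :
    lmb t = lmbAux (var v) (vs.map var) := by
  simp [lmb, h]

lemma catRel_lmb (hn : 2 ≤ n) (t : CTerm V n) : CatRel V n t (lmb t) := by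
  obtain ⟨v, vs, hv⟩ := List.exists_cons_of_ne_nil (U_ne_nil (by omega) t)
  simpa [lmbAux, lmb_eq_of_U_eq_cons hv] using
    catRel_lmbAux_of_U_eq_cons hn t (rs := []) (by simp) hv

lemma lmb_eq_of_U_eq (hn : 0 < n) {t t' : CTerm V n} (h : U t = U t') : lmb t = lmb t' := by
  obtain ⟨v, vs, hv⟩ := List.exists_cons_of_ne_nil (U_ne_nil hn t)
  rw [lmb_eq_of_U_eq_cons hv, lmb_eq_of_U_eq_cons (h ▸ hv)]

end CTerm

/-- STATEMENT 12: two terms are related by the `n`-Catalan congruence iff they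
have the same underlying list. -/
theorem catRel_iff_underlying_eq (n : ℕ) (hn : 2 ≤ n) (V : Type*) (t t' : CTerm V n) :
    CatRel V n t t' ↔ CTerm.U t = CTerm.U t' :=
  ⟨CTerm.U_eq_of_catRel, fun h =>
    (CTerm.catRel_lmb hn t).trans
      (CTerm.lmb_eq_of_U_eq (by omega) h ▸ (CTerm.catRel_lmb hn t').symm)⟩
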